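/- arXiv:1803.05797 — 4 statements merged into one kernel-verified Lean document; each statement's English description precedes it below -/
import Mathlib

section
/- For every cardinal κ with ℵ₀ ≤ κ ≤ 2^ℵ₀ there exists a Z-group G of cardinality κ that is not archimedean and satisfies ⋂_{n>0} nG = {0}. -/
/-- A Z-group: a linearly ordered abelian group with a least positive element `one`
such that every element is congruent to an integer multiple of `one` modulo `n`,
for every integer `n > 0`. -/
structure ZGroup where
  carrier : Type
  [grp : AddCommGroup carrier]
  [ord : LinearOrder carrier]
  [isOrd : IsOrderedAddMonoid carrier]
  one : carrier
  one_pos : 0 < one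
  one_least : ∀ x : carrier, 0 < x → one ≤ x
  div : ∀ g : carrier, ∀ n : ℤ, 0 < n → ∃ h : carrier, ∃ k : ℤ, g = n • h + k • one

attribute [instance] ZGroup.grp ZGroup.ord ZGroup.isOrd

/-!
Take a ℚ-subalgebra `V ⊆ ℝ` of cardinality `κ`, viewed as an ordered ℚ-vector space, and a
ℚ-linear `Φ : V → ℚ₂` such that `(v, y) ↦ Φ v + y` is injective on `V × ℚ`; it exists because
`dim_ℚ (V × ℚ) ≤ 𝔠 = dim_ℚ ℚ₂`. The group consists of the pairs `(v, y) ∈ V × ℤ[1/2]` with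
`Φ v + y ∈ ℤ₂`, ordered lexicographically. As `ℤ[1/2] ∩ ℤ₂ = ℤ`, its least positive element is
`(0, 1)`. Division with remainder in `ℤ (0, 1)` is carried out in `ℤ₂` for the divisor `2` and in
`ℤ[1/2]` for odd divisors. An element divisible by every `2 ^ j` has `Φ v + y ∈ ⋂ 2 ^ j ℤ₂ = 0`,
so it is `0`. Finally `(v, y) ↦ v` maps the group onto `V`, and any `(v, y)` with `v > 0` lies
above every multiple of `(0, 1)`.
-/

open Cardinal

noncomputable section

lemma Padic.norm_two : ‖(2 : ℚ_[2])‖ = 2⁻¹ := by simpa using Padic.norm_p (p := 2)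

lemma Padic.exists_intCast_norm_sub_div_two_le_one {β : ℚ_[2]} (hβ : ‖β‖ ≤ 1) :
    ∃ k : ℤ, ‖(β - k) / 2‖ ≤ 1 := by
  obtain ⟨n, -, hn⟩ := PadicInt.exists_mem_range (⟨β, hβ⟩ : ℤ_[2])
  obtain ⟨c, hc⟩ := Ideal.mem_span_singleton'.mp (PadicInt.maximalIdeal_eq_span_p (p := 2) ▸ hn)
  have hc' : (c : ℚ_[2]) * 2 = β - n := congrArg ((↑) : ℤ_[2] → ℚ_[2]) hc
  refine ⟨n, ?_⟩
  rw [Int.cast_natCast, ← hc', mul_div_cancel_right₀ _ two_ne_zero]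
  exact c.2

def dyadics : AddSubgroup ℚ where
  carrier := {y | ∃ (a : ℤ) (t : ℕ), y = a / 2 ^ t}
  zero_mem' := ⟨0, 0, by simp⟩
  add_mem' := by
    rintro _ _ ⟨a, t, rfl⟩ ⟨b, s, rfl⟩
    exact ⟨a * 2 ^ s + b * 2 ^ t, t + s, by field_simp; push_cast; ring⟩
  neg_mem' := by
    rintro _ ⟨a, t, rfl⟩
    exact ⟨-a, t, by push_cast; ring⟩

namespace dyadics

lemma intCast_mem (k : ℤ) : (k : ℚ) ∈ dyadics := ⟨k, 0, by simp⟩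

lemma div_two_mem {y : ℚ} (hy : y ∈ dyadics) : y / 2 ∈ dyadics := by
  obtain ⟨a, t, rfl⟩ := hy
  exact ⟨a, t + 1, by rw [pow_succ, div_div]⟩

lemma exists_sub_div_mem_of_odd {y : ℚ} (hy : y ∈ dyadics) {u : ℤ} (hu : Odd u) :
    ∃ k : ℤ, (y - k) / u ∈ dyadics := by
  obtain ⟨a, t, rfl⟩ := hy
  obtain ⟨x, z, hxz⟩ := (Int.isCoprime_two_left.mpr hu).pow_left (m := t)
  have hu0 : (u : ℚ) ≠ 0 := Int.cast_ne_zero.mpr (by rintro rfl; simp at hu)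
  refine ⟨a * x, a * z, t, ?_⟩
  push_cast
  field_simp
  linear_combination -(a : ℚ) * (by exact_mod_cast hxz : (x : ℚ) * 2 ^ t + z * u = 1)

lemma exists_eq_intCast_of_norm_le_one {y : ℚ} (hy : y ∈ dyadics) (h : ‖(y : ℚ_[2])‖ ≤ 1) :
    ∃ k : ℤ, y = k := by
  obtain ⟨a, t, rfl⟩ := hy
  have ha : ‖(a : ℚ_[2])‖ ≤ (2 : ℝ) ^ (-t : ℤ) := by
    push_cast at h
    rw [norm_div, norm_pow, Padic.norm_two, div_le_one (by positivity)] at h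
    simpa [zpow_neg] using h
  obtain ⟨k, rfl⟩ := (Padic.norm_int_le_pow_iff_dvd a t).mp (by exact_mod_cast ha)
  exact ⟨k, by push_cast; field_simp⟩

lemma exists_mem_norm_add_le_one (x : ℚ_[2]) : ∃ y ∈ dyadics, ‖x + y‖ ≤ 1 := by
  obtain ⟨m, hm⟩ := pow_unbounded_of_one_lt ‖x‖ (one_lt_two : (1 : ℝ) < 2)
  induction m generalizing x with
  | zero => exact ⟨0, zero_mem _, by simpa using hm.le⟩
  | succ m ih =>
    have h2x : ‖2 * x‖ < 2 ^ m := by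
      rw [norm_mul, Padic.norm_two, pow_succ] at *
      linarith
    obtain ⟨y, hy, hxy⟩ := ih (2 * x) h2x
    obtain ⟨k, hk⟩ := Padic.exists_intCast_norm_sub_div_two_le_one hxy
    refine ⟨(y - k) / 2, div_two_mem (sub_mem hy (intCast_mem k)), ?_⟩
    convert hk using 2
    push_cast
    ring

end dyadics

def GeneratesModulo {A : Type*} [AddCommGroup A] (e : A) (n : ℤ) : Prop :=
  ∀ g : A, ∃ h : A, ∃ k : ℤ, g = n • h + k • e

namespace GeneratesModulo

variable {A : Type*} [AddCommGroup A] {e : A}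

lemma mul {m n : ℤ} (hm : GeneratesModulo e m) (hn : GeneratesModulo e n) :
    GeneratesModulo e (m * n) := by
  intro g
  obtain ⟨h, k, rfl⟩ := hm g
  obtain ⟨h', k', rfl⟩ := hn h
  exact ⟨h', m * k' + k, by simp only [smul_add, mul_smul, add_smul]; abel⟩

lemma pow {n : ℤ} (hn : GeneratesModulo e n) (s : ℕ) : GeneratesModulo e (n ^ s) := by
  induction s with
  | zero => exact fun g ↦ ⟨g, 0, by simp⟩
  | succ s ih => rw [pow_succ]; exact ih.mul hn

lemma of_two_of_odd (h2 : GeneratesModulo e 2) (hodd : ∀ u : ℤ, Odd u → GeneratesModulo e u)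
    {n : ℤ} (hn : 0 < n) : GeneratesModulo e n := by
  lift n to ℕ using hn.le
  obtain ⟨s, u, hu, rfl⟩ := Nat.exists_eq_two_pow_mul_odd (n := n) (by omega)
  push_cast
  exact (h2.pow s).mul (hodd u hu.natCast)

end GeneratesModulo

section PadicSubgroup

variable {V : Type} [AddCommGroup V] [Module ℚ V] (Φ : V →ₗ[ℚ] ℚ_[2])

def toPadic : Lex (V × ℚ) →+ ℚ_[2] :=
  (Φ.toAddMonoidHom.coprod (Rat.castHom ℚ_[2]).toAddMonoidHom).comp
    (ofLexAddEquiv (V × ℚ)).toAddMonoidHom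

@[simp] lemma toPadic_toLex (v : V) (y : ℚ) : toPadic Φ (toLex (v, y)) = Φ v + y := rfl

def padicSubgroup : AddSubgroup (Lex (V × ℚ)) :=
  dyadics.comap ((AddMonoidHom.snd V ℚ).comp (ofLexAddEquiv (V × ℚ)).toAddMonoidHom) ⊓
    (PadicInt.subring 2).toAddSubgroup.comap (toPadic Φ)

lemma toLex_mem_padicSubgroup {v : V} {y : ℚ} :
    toLex (v, y) ∈ padicSubgroup Φ ↔ y ∈ dyadics ∧ ‖Φ v + y‖ ≤ 1 := Iff.rfl

lemma exists_toLex_mem_padicSubgroup (v : V) : ∃ y : ℚ, toLex (v, y) ∈ padicSubgroup Φ := by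
  obtain ⟨y, hy, hvy⟩ := dyadics.exists_mem_norm_add_le_one (Φ v)
  exact ⟨y, hy, hvy⟩

lemma cardinalMk_padicSubgroup [Infinite V] : #(padicSubgroup Φ) = #V := by
  refine le_antisymm ?_ ?_
  · calc #(padicSubgroup Φ) ≤ #(V × ℚ) := mk_subtype_le _
      _ = #V := by
        rw [mk_prod, lift_id, lift_id, Cardinal.mkRat,
          mul_eq_left (aleph0_le_mk V) (aleph0_le_mk V) aleph0_ne_zero]
  · refine mk_le_of_surjective (f := fun g : padicSubgroup Φ ↦ (ofLex g.1).1) fun v ↦ ?_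
    obtain ⟨y, hy⟩ := exists_toLex_mem_padicSubgroup Φ v
    exact ⟨⟨_, hy⟩, rfl⟩

lemma padicSubgroup.eq_zero_of_forall_exists_eq_zsmul (hΦ : Function.Injective (toPadic Φ))
    (g : padicSubgroup Φ) (hg : ∀ n : ℤ, 0 < n → ∃ h : padicSubgroup Φ, g = n • h) : g = 0 := by
  have hle : ∀ j : ℕ, ‖toPadic Φ g‖ ≤ 2⁻¹ ^ j := fun j ↦ by
    obtain ⟨⟨h, hh⟩, rfl⟩ := hg (2 ^ j) (by positivity)
    rw [AddSubgroup.coe_zsmul, map_zsmul, zsmul_eq_mul, norm_mul]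
    push_cast
    rw [norm_pow, Padic.norm_two]
    exact mul_le_of_le_one_right (by positivity) hh.2
  have h0 : toPadic Φ g = 0 := norm_le_zero_iff.mp <|
    ge_of_tendsto' (tendsto_pow_atTop_nhds_zero_of_lt_one (by norm_num) (by norm_num)) hle
  exact Subtype.ext (hΦ (h0.trans (map_zero _).symm))

def padicOne : padicSubgroup Φ := ⟨toLex (0, 1), ⟨1, 0, by simp⟩, by simp⟩

lemma generatesModulo_padicOne {n : ℤ} (hn : n ≠ 0)
    (H : ∀ y ∈ dyadics, ∀ β : ℚ_[2], ‖β‖ ≤ 1 →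
      ∃ k : ℤ, (y - k) / n ∈ dyadics ∧ ‖(β - k) / n‖ ≤ 1) :
    GeneratesModulo (padicOne Φ) n := by
  rintro ⟨g, hg⟩
  obtain ⟨⟨v, y⟩, rfl⟩ := toLex.surjective g
  rw [toLex_mem_padicSubgroup] at hg
  obtain ⟨k, hk, hβk⟩ := H y hg.1 _ hg.2
  have hn' : (n : ℚ) ≠ 0 := by exact_mod_cast hn
  refine ⟨⟨toLex ((n : ℚ)⁻¹ • v, (y - k) / n), (toLex_mem_padicSubgroup Φ).mpr ⟨hk, ?_⟩⟩, k,
    Subtype.ext ?_⟩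
  · convert hβk using 2
    rw [map_smul, Rat.smul_def]
    push_cast
    ring
  · simp only [AddSubgroup.coe_add, AddSubgroup.coe_zsmul, padicOne, ← toLex_smul, ← toLex_add,
      Prod.smul_mk, Prod.mk_add_mk, smul_zero, add_zero, ← Int.cast_smul_eq_zsmul ℚ, smul_smul,
      mul_inv_cancel₀ hn', one_smul, smul_eq_mul]
    congr 2
    field_simp
    ring

lemma generatesModulo_padicOne_two : GeneratesModulo (padicOne Φ) 2 := by
  refine generatesModulo_padicOne Φ two_ne_zero fun y hy β hβ ↦ ?_
  obtain ⟨k, hk⟩ := Padic.exists_intCast_norm_sub_div_two_le_one hβ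
  exact ⟨k, by exact_mod_cast dyadics.div_two_mem (sub_mem hy (dyadics.intCast_mem k)),
    by exact_mod_cast hk⟩

lemma generatesModulo_padicOne_of_odd {u : ℤ} (hu : Odd u) : GeneratesModulo (padicOne Φ) u := by
  refine generatesModulo_padicOne Φ (by rintro rfl; simp at hu) fun y hy β hβ ↦ ?_
  obtain ⟨k, hk⟩ := dyadics.exists_sub_div_mem_of_odd hy hu
  refine ⟨k, hk, ?_⟩
  rw [norm_div, Padic.norm_intCast_eq_one_iff.mpr (Int.isCoprime_two_right.mpr hu), div_one]
  exact (PadicInt.subring 2).sub_mem hβ (intCast_mem _ k)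

variable [LinearOrder V]

lemma padicOne_le_of_pos {g : padicSubgroup Φ} (hg : 0 < g) : padicOne Φ ≤ g := by
  obtain ⟨g, hmem⟩ := g
  obtain ⟨⟨v, y⟩, rfl⟩ := toLex.surjective g
  change toLex (0, 0) < toLex (v, y) at hg
  change toLex (0, 1) ≤ toLex (v, y)
  simp only [Prod.Lex.toLex_lt_toLex, Prod.Lex.toLex_le_toLex] at hg ⊢
  obtain hv | ⟨rfl, hy⟩ := hg
  · exact Or.inl hv
  · rw [toLex_mem_padicSubgroup, map_zero, zero_add] at hmem
    obtain ⟨k, rfl⟩ := dyadics.exists_eq_intCast_of_norm_le_one hmem.1 hmem.2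
    have hk : (0 : ℤ) < k := by exact_mod_cast hy
    exact Or.inr ⟨rfl, by exact_mod_cast hk⟩

variable [IsOrderedAddMonoid V]

def padicZGroup : ZGroup where
  carrier := padicSubgroup Φ
  one := padicOne Φ
  one_pos := show toLex ((0 : V), (0 : ℚ)) < toLex (0, 1) by simp [Prod.Lex.toLex_lt_toLex]
  one_least _ := padicOne_le_of_pos Φ
  div _ _ hn := GeneratesModulo.of_two_of_odd (generatesModulo_padicOne_two Φ)
    (fun _ ↦ generatesModulo_padicOne_of_odd Φ) hn _

lemma not_archimedean_padicSubgroup [Nontrivial V] : ¬ Archimedean (padicSubgroup Φ) := by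
  intro h
  obtain ⟨v, hv⟩ := exists_zero_lt (α := V)
  obtain ⟨y, hy⟩ := exists_toLex_mem_padicSubgroup Φ v
  obtain ⟨n, hn⟩ := h.arch ⟨_, hy⟩ (padicZGroup Φ).one_pos
  change toLex (v, y) ≤ toLex (n • ((0 : V), (1 : ℚ))) at hn
  simp only [Prod.smul_mk, smul_zero, Prod.Lex.toLex_le_toLex] at hn
  rcases hn with hlt | ⟨heq, -⟩
  · exact hlt.not_gt hv
  · exact hv.ne' heq

end PadicSubgroup

lemma exists_injective_toPadic {V : Type} [AddCommGroup V] [Module ℚ V] (hV : #V ≤ 𝔠) :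
    ∃ Φ : V →ₗ[ℚ] ℚ_[2], Function.Injective (toPadic Φ) := by
  have hrank : Module.rank ℚ (V × ℚ) ≤ Module.rank ℚ ℚ_[2] := by
    have hlt : #ℚ < #ℚ_[2] := Cardinal.mkRat ▸
      aleph0_lt_continuum.trans_le (continuum_le_cardinal_of_nontriviallyNormedField ℚ_[2])
    calc Module.rank ℚ (V × ℚ) ≤ #(V × ℚ) := rank_le_card ℚ _
      _ ≤ 𝔠 * 𝔠 := by
        rw [mk_prod, lift_id, lift_id, Cardinal.mkRat]
        exact mul_le_mul' hV aleph0_le_continuum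
      _ ≤ #ℚ_[2] :=
        continuum_mul_self.trans_le (continuum_le_cardinal_of_nontriviallyNormedField _)
      _ = Module.rank ℚ ℚ_[2] :=
        (Module.Free.rank_eq_mk_of_infinite_lt ℚ ℚ_[2] (by simpa using hlt)).symm
  obtain ⟨Ψ, hΨ⟩ := rank_le_iff_exists_linearMap.mp hrank
  set c := Ψ (0, 1)
  have hc : c ≠ 0 := fun h ↦ by simpa using hΨ (h.trans (map_zero Ψ).symm)
  set Φ := LinearMap.mulLeft ℚ c⁻¹ ∘ₗ Ψ ∘ₗ LinearMap.inl ℚ V ℚ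
  -- normalising by `c = Ψ (0, 1)` makes `toPadic Φ` equal to `c⁻¹ • Ψ`, hence injective
  have hΦ : ∀ g, toPadic Φ g = c⁻¹ * Ψ (ofLex g) := fun g ↦ by
    obtain ⟨⟨v, y⟩, rfl⟩ := toLex.surjective g
    have hvy : (v, y) = (v, 0) + y • (0, 1) := by simp
    rw [ofLex_toLex, toPadic_toLex, hvy, map_add, map_smul, Rat.smul_def, mul_add,
      mul_left_comm, inv_mul_cancel₀ hc, mul_one]
    rfl
  refine ⟨Φ, fun g g' h ↦ ?_⟩
  rw [hΦ, hΦ] at h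
  exact hΨ (mul_left_cancel₀ (inv_ne_zero hc) h)

lemma exists_subalgebra_real_cardinalMk_eq {κ : Cardinal} (h1 : ℵ₀ ≤ κ) (h2 : κ ≤ 𝔠) :
    ∃ V : Subalgebra ℚ ℝ, #V = κ := by
  obtain ⟨S, hS⟩ := le_mk_iff_exists_set.mp (h2.trans_eq mk_real.symm)
  refine ⟨Algebra.adjoin ℚ S, le_antisymm ?_ ?_⟩
  · calc _ ≤ #ℚ ⊔ #S ⊔ ℵ₀ := Algebra.cardinalMk_adjoin_le ℚ S
      _ = κ := by simp [hS, h1]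
  · exact hS ▸ mk_le_mk_of_subset (Algebra.subset_adjoin (R := ℚ))

end

/-- For every infinite cardinal `κ ≤ 2^ℵ₀` there is a non-archimedean Leibnizian
Z-group of cardinality `κ`. -/
theorem exists_nonarchimedean_leibnizian_zgroup (κ : Cardinal)
    (h1 : Cardinal.aleph0 ≤ κ) (h2 : κ ≤ 2 ^ Cardinal.aleph0) :
    ∃ Z : ZGroup, Cardinal.mk Z.carrier = κ ∧
      ¬ (∀ x y : Z.carrier, 0 < x → ∃ n : ℕ, y ≤ n • x) ∧
      (∀ g : Z.carrier, (∀ n : ℤ, 0 < n → ∃ h : Z.carrier, g = n • h) → g = 0) := by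
  rw [two_power_aleph0] at h2
  obtain ⟨V, hV⟩ := exists_subalgebra_real_cardinalMk_eq h1 h2
  have : Infinite V := infinite_iff.mpr (hV ▸ h1)
  obtain ⟨Φ, hΦ⟩ := exists_injective_toPadic (hV.trans_le h2)
  exact ⟨padicZGroup Φ, (cardinalMk_padicSubgroup Φ).trans hV,
    fun h ↦ not_archimedean_padicSubgroup Φ ⟨fun x _ hy ↦ h _ x hy⟩,
    padicSubgroup.eq_zero_of_forall_exists_eq_zsmul Φ hΦ⟩
end

section
/- Let G be a rigid Z-group, D = ⋂_{n>0} nG, and L a pure subgroup of G with 1 ∈ L such that G is the internal direct sum of D and L. Then: (i) D is archimedean, i.e., for all d, d' ∈ D with 0 < d there is a natural number n with d' ≤ n·d; (ii) D = {0} or D is cofinal in G; (iii) L is cofinal in G. -/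
/-!
Rigidity is used through two kinds of order automorphisms fixing `1`. Suppose a convex subgroup
`C ∋ 1` contains a nonzero divisible element `d` but some `g ∉ C`. Then `G ⧸ C` is torsion-free
and the divisible elements of `C` form an injective `ℤ`-module, so some homomorphism
`ψ : G ⧸ C → C` sends `g` to `d`, and the shear `x ↦ x + ψ x` is an order automorphism
moving `g`.
Applied to the convex hulls of `ℤ d` and of `D`, this gives (i) and (ii).
For (iii), if `L` were bounded above, some positive element of `D` would exceed all of `L`; by (i)
every positive element of `D` then does, so the order on `D ⊕ L` is lexicographic and doubling the
`D`-component is an order automorphism moving it.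
-/

section DivisiblePart

variable (G : Type*) [AddCommGroup G]

def divisiblePart : AddSubgroup G where
  carrier := {g | ∀ n : ℤ, 0 < n → ∃ h : G, g = n • h}
  zero_mem' n _ := ⟨0, by simp⟩
  add_mem' {x y} hx hy n hn := by
    obtain ⟨a, rfl⟩ := hx n hn
    obtain ⟨b, rfl⟩ := hy n hn
    exact ⟨a + b, (smul_add n a b).symm⟩
  neg_mem' {x} hx n hn := by
    obtain ⟨a, rfl⟩ := hx n hn
    exact ⟨-a, (smul_neg n a).symm⟩

variable {G} [IsAddTorsionFree G]

lemma mem_divisiblePart_of_zsmul_mem {n : ℤ} (hn : n ≠ 0) {x : G}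
    (hx : n • x ∈ divisiblePart G) : x ∈ divisiblePart G := by
  wlog hpos : 0 < n generalizing n
  · exact this (neg_ne_zero.2 hn) (by simpa using neg_mem hx) (by omega)
  intro m hm
  obtain ⟨h, hh⟩ := hx (n * m) (mul_pos hpos hm)
  exact ⟨h, zsmul_right_injective hn (by rwa [mul_zsmul] at hh)⟩

lemma exists_zsmul_eq_of_mem_divisiblePart {x : G} (hx : x ∈ divisiblePart G) {n : ℤ}
    (hn : n ≠ 0) : ∃ y ∈ divisiblePart G, n • y = x := by
  rcases hn.lt_or_gt with hneg | hpos
  · obtain ⟨h, rfl⟩ := hx (-n) (by omega)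
    refine ⟨-h, mem_divisiblePart_of_zsmul_mem hn ?_, by simp⟩
    simpa using neg_mem hx
  · obtain ⟨h, rfl⟩ := hx n hpos
    exact ⟨h, mem_divisiblePart_of_zsmul_mem hn hx, rfl⟩

end DivisiblePart

lemma AddMonoidHom.exists_apply_eq_of_divisible {V A : Type*} [AddCommGroup V] [AddCommGroup A]
    (hA : ∀ n : ℤ, n ≠ 0 → ∀ a : A, ∃ b, n • b = a) {v : V}
    (hv : ∀ n : ℤ, n • v = 0 → n = 0) (a : A) : ∃ ψ : V →+ A, ψ v = a := by
  let _ : DivisibleBy A ℤ := AddCommGroup.divisibleByIntOfSMulTopEqTop A fun {n} hn =>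
    eq_top_iff.2 fun b _ => by
      obtain ⟨c, hc⟩ := hA n hn b
      exact (AddSubgroup.mem_smul_pointwise_iff_exists b n ⊤).2 ⟨c, trivial, hc⟩
  have hinj : Function.Injective (zmultiplesHom V v) := by
    rw [injective_iff_map_eq_zero]
    exact hv
  obtain ⟨ψ, hψ⟩ := (Module.Baer.of_divisible A).extension_property_addMonoidHom _ hinj
    (zmultiplesHom A a)
  exact ⟨ψ, by simpa using DFunLike.congr_fun hψ 1⟩

section Unordered

variable {G : Type*} [AddCommGroup G]

def AddAut.shear (φ : G →+ G) (hφ : ∀ x, φ (φ x) = 0) : G ≃+ G where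
  toFun x := x + φ x
  invFun x := x - φ x
  left_inv x := by simp [hφ]
  right_inv x := by simp [hφ]
  map_add' x y := by simp only [map_add]; abel

lemma AddAut.shear_apply (φ : G →+ G) (hφ : ∀ x, φ (φ x) = 0) (x : G) :
    AddAut.shear φ hφ x = x + φ x := rfl

open Submodule in
lemma surjective_add_projection {D L : Submodule ℤ G} (hDL : IsCompl D L)
    (hhalf : ∀ x ∈ D, ∃ y ∈ D, (2 : ℤ) • y = x) :
    Function.Surjective fun x => x + D.projection L hDL x := by
  intro y
  obtain ⟨h, hhD, hh⟩ := hhalf _ (projection_apply_mem hDL y)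
  set q := L.projection D hDL.symm y
  refine ⟨h + q, ?_⟩
  have hq : D.projection L hDL q = 0 :=
    projection_apply_of_mem_right hDL (projection_apply_mem hDL.symm y)
  simp only [map_add, projection_apply_of_mem_left hDL hhD, hq, add_zero]
  rw [← projection_add_projection_eq_self hDL y, ← hh, two_zsmul]
  abel

end Unordered

section Ordered

variable {G : Type*} [AddCommGroup G] [LinearOrder G] [IsOrderedAddMonoid G]

def IsRigid (one : G) : Prop :=
  ∀ f : G ≃+ G, Monotone f → f one = one → ∀ x : G, f x = x

namespace AddSubgroup

lemma mem_of_zsmul_mem {C : AddSubgroup G} (hC : (C : Set G).OrdConnected) {n : ℤ} (hn : n ≠ 0)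
    {x : G} (hx : n • x ∈ C) : x ∈ C := by
  rw [← abs_mem_iff] at hx ⊢
  refine hC.out C.zero_mem hx ⟨abs_nonneg x, ?_⟩
  calc |x| = (1 : ℤ) • |x| := (one_zsmul _).symm
    _ ≤ |n| • |x| := zsmul_le_zsmul_left (abs_nonneg x) (Int.one_le_abs hn)
    _ = |n • x| := (abs_zsmul n x).symm

def convexClosure (H : AddSubgroup G) : AddSubgroup G where
  carrier := {x | ∃ h ∈ H, |x| ≤ h}
  zero_mem' := ⟨0, H.zero_mem, by simp⟩
  add_mem' := by
    rintro x y ⟨a, ha, hxa⟩ ⟨b, hb, hyb⟩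
    exact ⟨a + b, H.add_mem ha hb, (abs_add_le x y).trans (add_le_add hxa hyb)⟩
  neg_mem' := by
    rintro x ⟨a, ha, hxa⟩
    exact ⟨a, ha, by rwa [abs_neg]⟩

lemma ordConnected_convexClosure (H : AddSubgroup G) : (H.convexClosure : Set G).OrdConnected := by
  refine ⟨fun a ⟨c, hc, hac⟩ b ⟨d, hd, hbd⟩ x hx => ⟨c + d, H.add_mem hc hd, ?_⟩⟩
  calc |x| ≤ max |a| |b| := abs_le_max_abs_abs hx.1 hx.2
    _ ≤ |a| + |b| := max_le_add_of_nonneg (abs_nonneg a) (abs_nonneg b)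
    _ ≤ c + d := add_le_add hac hbd

lemma le_convexClosure (H : AddSubgroup G) : H ≤ H.convexClosure :=
  fun x hx => ⟨|x|, abs_mem_iff.2 hx, le_rfl⟩

end AddSubgroup

lemma AddAut.monotone_shear {C : AddSubgroup G} (hC : (C : Set G).OrdConnected) (φ : G →+ G)
    (hker : ∀ x ∈ C, φ x = 0) (hrange : ∀ x, φ x ∈ C) :
    Monotone (AddAut.shear φ fun x => hker _ (hrange x)) := by
  refine (monotone_iff_map_nonneg _).2 fun x hx => ?_
  rw [AddAut.shear_apply]
  by_cases hxC : x ∈ C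
  · simpa [hker x hxC] using hx
  · by_contra! hneg
    exact hxC (hC.out C.zero_mem (C.neg_mem (hrange x)) ⟨hx, (lt_neg_iff_add_neg.2 hneg).le⟩)

variable {one : G}

theorem IsRigid.eq_top_of_ordConnected (hrig : IsRigid one) {C : AddSubgroup G}
    (hC : (C : Set G).OrdConnected) (hone : one ∈ C) {d : G} (hd : d ≠ 0) (hdC : d ∈ C)
    (hdD : d ∈ divisiblePart G) : C = ⊤ := by
  by_contra hne
  obtain ⟨g, hg⟩ : ∃ g, g ∉ C := by simpa [AddSubgroup.eq_top_iff'] using hne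
  let A := divisiblePart G ⊓ C
  have hA : ∀ n : ℤ, n ≠ 0 → ∀ a : A, ∃ b : A, n • b = a := by
    rintro n hn ⟨a, haD, haC⟩
    obtain ⟨b, hbD, rfl⟩ := exists_zsmul_eq_of_mem_divisiblePart haD hn
    exact ⟨⟨b, hbD, C.mem_of_zsmul_mem hC hn haC⟩, rfl⟩
  have hg' : ∀ n : ℤ, n • (g : G ⧸ C) = 0 → n = 0 := by
    intro n hn
    by_contra hn0
    rw [← QuotientAddGroup.mk_zsmul, QuotientAddGroup.eq_zero_iff] at hn
    exact hg (C.mem_of_zsmul_mem hC hn0 hn)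
  obtain ⟨ψ, hψ⟩ := AddMonoidHom.exists_apply_eq_of_divisible hA hg' (⟨d, hdD, hdC⟩ : A)
  let φ : G →+ G := A.subtype.comp (ψ.comp (QuotientAddGroup.mk' C))
  have hker : ∀ x ∈ C, φ x = 0 := fun x hx => by
    simp [φ, (QuotientAddGroup.eq_zero_iff x).2 hx]
  have hrange : ∀ x, φ x ∈ C := fun x => (ψ x).2.2
  have hfix := hrig _ (AddAut.monotone_shear hC φ hker hrange)
    (by rw [AddAut.shear_apply, hker one hone, add_zero]) g
  have hφg : φ g = d := by simp [φ, hψ]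
  rw [AddAut.shear_apply, hφg, add_eq_left] at hfix
  exact hd hfix

theorem IsRigid.exists_le_of_mem_divisiblePart (hrig : IsRigid one) (H : AddSubgroup G) {d : G}
    (hd : d ≠ 0) (hdH : d ∈ H) (hdD : d ∈ divisiblePart G) (hone : |one| ≤ d) (x : G) :
    ∃ h ∈ H, x ≤ h := by
  have htop := hrig.eq_top_of_ordConnected H.ordConnected_convexClosure ⟨d, hdH, hone⟩ hd
    (H.le_convexClosure hdH) hdD
  obtain ⟨h, hh, hxh⟩ : x ∈ H.convexClosure := htop ▸ AddSubgroup.mem_top x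
  exact ⟨h, hh, (le_abs_self x).trans hxh⟩

lemma pos_add_of_forall_lt {D L : Submodule ℤ G}
    (harch : ∀ d ∈ D, ∀ d' ∈ D, 0 < d → ∃ n : ℕ, d' ≤ n • d) {e : G}
    (heD : e ∈ D) (he : ∀ l ∈ L, l < e) {x : G} (hxD : x ∈ D) (hx : 0 < x) {l : G} (hl : l ∈ L) :
    0 < x + l := by
  obtain ⟨n, hn⟩ := harch x hxD e heD hx
  have hlt : -(n • l) < n • x := by
    rw [← smul_neg]
    exact (he _ (nsmul_mem (neg_mem hl) n)).trans_le hn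
  have hn0 : n ≠ 0 := by rintro rfl; simp at hlt
  rw [← nsmul_pos_iff hn0, smul_add]
  exact neg_lt_iff_pos_add.1 hlt

open Submodule in
lemma pos_add_projection {D L : Submodule ℤ G} (hDL : IsCompl D L)
    (hlex : ∀ x ∈ D, 0 < x → ∀ l ∈ L, 0 < x + l) {x : G} (hx : 0 < x) :
    0 < x + D.projection L hDL x := by
  have hx_eq := projection_add_projection_eq_self hDL x
  set p := D.projection L hDL x
  set q := L.projection D hDL.symm x
  have hpD : p ∈ D := projection_apply_mem hDL x
  have hqL : q ∈ L := projection_apply_mem hDL.symm x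
  rcases lt_trichotomy p 0 with hp | hp | hp
  · have := hlex (-p) (neg_mem hpD) (neg_pos.2 hp) (-q) (neg_mem hqL)
    rw [← neg_add, hx_eq, neg_pos] at this
    exact absurd hx this.not_gt
  · simpa [hp] using hx
  · have := hlex (p + p) (add_mem hpD hpD) (add_pos hp hp) q hqL
    rwa [add_assoc, hx_eq, add_comm] at this

open Submodule in
theorem IsRigid.exists_le_of_isCompl (hrig : IsRigid one) {D L : Submodule ℤ G}
    (hDL : IsCompl D L) (hone : one ∈ L) (hhalf : ∀ x ∈ D, ∃ y ∈ D, (2 : ℤ) • y = x)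
    (harch : ∀ d ∈ D, ∀ d' ∈ D, 0 < d → ∃ n : ℕ, d' ≤ n • d) (g : G) :
    ∃ l ∈ L, g ≤ l := by
  by_contra! hg
  set e := D.projection L hDL g
  have he : ∀ l ∈ L, l < e := fun l hl => by
    rw [← add_lt_add_iff_right (L.projection D hDL.symm g), projection_add_projection_eq_self]
    exact hg _ (add_mem hl (projection_apply_mem _ g))
  -- `D` dominates `L`, so doubling the `D`-component is an order automorphism.
  let F : G →+ G := AddMonoidHom.id G + (D.projection L hDL).toAddMonoidHom
  have hF : StrictMono F := (strictMono_iff_map_pos F).2 fun x hx =>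
    pos_add_projection hDL (fun x hxD hx l hl => pos_add_of_forall_lt harch
      (projection_apply_mem hDL g) he hxD hx hl) hx
  have hFone : F one = one := by
    simp [F, projection_apply_of_mem_right hDL hone]
  have hfix : F e = e :=
    hrig (AddEquiv.ofBijective F ⟨hF.injective, surjective_add_projection hDL hhalf⟩)
      hF.monotone hFone e
  have hFe : F e = e + e := by
    simp [F, e, projection_apply_of_mem_left hDL (projection_apply_mem hDL g)]
  rw [hFe, add_eq_left] at hfix
  exact (he 0 L.zero_mem).ne' hfix

end Ordered

theorem rigid_structure_general (G : Type*) [AddCommGroup G] [LinearOrder G] [IsOrderedAddMonoid G] (one : G)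
    (hpos : 0 < one) (hleast : ∀ x : G, 0 < x → one ≤ x)
    (hrig : ∀ f : G ≃+ G, Monotone f → f one = one → ∀ x : G, f x = x)
    (D : Set G) (hD : D = {g : G | ∀ n : ℤ, 0 < n → ∃ h : G, g = n • h})
    (L : AddSubgroup G) (honeL : one ∈ L)
    (hDL : ∀ g : G, g ∈ D → g ∈ L → g = 0)
    (hsum : ∀ g : G, ∃ d ∈ D, ∃ l ∈ L, g = d + l) :
    (∀ d ∈ D, ∀ d' ∈ D, 0 < d → ∃ n : ℕ, d' ≤ n • d) ∧
    (D = {0} ∨ ∀ g : G, ∃ d ∈ D, g ≤ d) ∧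
    (∀ g : G, ∃ l ∈ L, g ≤ l) := by
  obtain rfl : D = divisiblePart G := hD
  have hG : IsRigid one := hrig
  have hone : ∀ {d : G}, 0 < d → |one| ≤ d := fun hd =>
    (abs_of_pos hpos).trans_le (hleast _ hd)
  have harch :
      ∀ d ∈ divisiblePart G, ∀ d' ∈ divisiblePart G, 0 < d → ∃ n : ℕ, d' ≤ n • d := by
    intro d hdD d' _ hd
    obtain ⟨_, ⟨k, rfl⟩, hk⟩ := hG.exists_le_of_mem_divisiblePart (.zmultiples d) hd.ne'
      (AddSubgroup.mem_zmultiples d) hdD (hone hd) d'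
    refine ⟨k.toNat, hk.trans ?_⟩
    rw [← natCast_zsmul]
    exact zsmul_le_zsmul_left hd.le (Int.self_le_toNat k)
  have hcompl : IsCompl (divisiblePart G).toIntSubmodule L.toIntSubmodule := by
    refine ⟨Submodule.disjoint_def.2 hDL,
      codisjoint_iff.2 (Submodule.eq_top_iff'.2 fun g => ?_)⟩
    obtain ⟨d, hd, l, hl, rfl⟩ := hsum g
    exact Submodule.add_mem_sup hd hl
  refine ⟨harch, ?_, hG.exists_le_of_isCompl hcompl honeL (fun x hx => ?_) harch⟩
  · rcases (divisiblePart G).bot_or_exists_ne_zero with hbot | ⟨d, hdD, hd⟩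
    · exact .inl (by simp [hbot])
    · exact .inr (hG.exists_le_of_mem_divisiblePart _ (abs_pos.2 hd).ne' (abs_mem_iff.2 hdD)
        (abs_mem_iff.2 hdD) (hone (abs_pos.2 hd)))
  · exact exists_zsmul_eq_of_mem_divisiblePart hx two_ne_zero

/-- In a rigid Z-group `G = D ⊕ L` (with `D = ⋂_{n>0} nG` and `L` a pure subgroup
containing `1`): `D` is archimedean, `D` is trivial or cofinal in `G`, and `L` is
cofinal in `G`. -/
theorem rigid_structure (G : Type*) [AddCommGroup G] [LinearOrder G] [IsOrderedAddMonoid G] (one : G)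
    (hpos : 0 < one) (hleast : ∀ x : G, 0 < x → one ≤ x)
    (hdiv : ∀ g : G, ∀ n : ℤ, 0 < n → ∃ h : G, ∃ k : ℤ, g = n • h + k • one)
    (hrig : ∀ f : G ≃+ G, Monotone f → f one = one → ∀ x : G, f x = x)
    (D : Set G) (hD : D = {g : G | ∀ n : ℤ, 0 < n → ∃ h : G, g = n • h})
    (L : AddSubgroup G) (honeL : one ∈ L)
    (hpure : ∀ (n : ℤ) (b : G), 0 < n → n • b ∈ L → b ∈ L)
    (hDL : ∀ g : G, g ∈ D → g ∈ L → g = 0)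
    (hsum : ∀ g : G, ∃ d ∈ D, ∃ l ∈ L, g = d + l) :
    (∀ d ∈ D, ∀ d' ∈ D, 0 < d → ∃ n : ℕ, d' ≤ n • d) ∧
    (D = {0} ∨ ∀ g : G, ∃ d ∈ D, g ≤ d) ∧
    (∀ g : G, ∃ l ∈ L, g ≤ l) :=
  rigid_structure_general G one hpos hleast hrig D hD L honeL hDL hsum
end

section
/- Every rigid Z-group has cardinality at most 2^ℵ₀. -/
/-!
Let `D` be the subgroup of elements divisible by every positive integer. Each `G ⧸ nG` is
generated by the image of `1`, hence countable, and `G ⧸ D` embeds in their product, so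
`#G ≤ 𝔠 * #D`. Rigidity forces `D` to be archimedean: if `a ∈ D` is nonzero and `b` is
infinitely larger than `a`, let `C` be the convex subgroup of elements bounded by multiples of
`a`. As `ℚ` is an injective group and `b` has infinite order modulo `C`, there is
`ψ : G ⧸ C →+ ℚ` with `ψ b = 1`; divisibility of `a` gives `μ : ℚ →+ G` with `μ 1 = a`. Then
`x ↦ x + μ (ψ x)` moves every `x` by something infinitely smaller than `x`, so it is an order
automorphism; it fixes `1 ∈ C` but moves `b`. Finally an archimedean group embeds in `ℝ`, so
`#D ≤ 𝔠`.
-/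

@[simps]
def AddMonoidHom.shearEquiv {A : Type*} [AddCommGroup A] (φ : A →+ A) (hφ : ∀ x, φ (φ x) = 0) :
    A ≃+ A where
  toFun x := x + φ x
  invFun x := x - φ x
  left_inv x := by simp [hφ]
  right_inv x := by simp [hφ]
  map_add' x y := by simp only [map_add]; abel

theorem AddMonoidHom.exists_apply_eq_of_divisibleBy {A B : Type*} [AddCommGroup A]
    [AddCommGroup B] [DivisibleBy B ℤ] {a : A} (ha : ∀ n : ℤ, n • a = 0 → n = 0) (b : B) :
    ∃ f : A →+ B, f a = b := by
  have hinj : Function.Injective (zmultiplesHom A a) :=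
    (injective_iff_map_eq_zero _).mpr fun n hn => ha n (by simpa using hn)
  obtain ⟨f, hf⟩ := (Module.Baer.of_divisible B).extension_property_addMonoidHom _ hinj
    (zmultiplesHom B b)
  exact ⟨f, by simpa using DFunLike.congr_fun hf 1⟩

section DivisibleElements

open Cardinal

variable (A : Type*) [AddCommGroup A]

def divisibleElements : AddSubgroup A :=
  ⨅ n : ℕ+, (nsmulAddMonoidHom (n : ℕ) : A →+ A).range

variable {A}

theorem mem_divisibleElements {a : A} :
    a ∈ divisibleElements A ↔ ∀ n : ℕ+, ∃ b : A, (n : ℕ) • b = a := by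
  simp [divisibleElements, AddSubgroup.mem_iInf]

theorem mk_le_continuum_mul_mk_divisibleElements
    (hcount : ∀ n : ℕ+, Countable (A ⧸ (nsmulAddMonoidHom (n : ℕ) : A →+ A).range)) :
    #A ≤ 𝔠 * #(divisibleElements A) := by
  let ρ : A →+ ∀ n : ℕ+, A ⧸ (nsmulAddMonoidHom (n : ℕ) : A →+ A).range :=
    AddMonoidHom.pi fun _ => QuotientAddGroup.mk' _
  have hker : ρ.ker = divisibleElements A := by
    ext a
    simp [ρ, divisibleElements, funext_iff, AddSubgroup.mem_iInf]
  have hpi : #(∀ n : ℕ+, A ⧸ (nsmulAddMonoidHom (n : ℕ) : A →+ A).range) ≤ 𝔠 := by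
    rw [mk_pi]
    calc prod _ ≤ prod fun _ : ℕ+ => ℵ₀ := prod_le_prod _ _ fun n => mk_le_aleph0
      _ = 𝔠 := by simp [prod_const, aleph0_power_aleph0]
  calc #A = #(A ⧸ ρ.ker) * #ρ.ker := by
        rw [mk_congr AddSubgroup.addGroupEquivQuotientProdAddSubgroup, mk_prod, lift_id, lift_id]
    _ ≤ 𝔠 * #ρ.ker :=
        mul_le_mul_left ((mk_le_of_injective (QuotientAddGroup.kerLift_injective ρ)).trans hpi) _
    _ = 𝔠 * #(divisibleElements A) := by rw [hker]

variable [IsAddTorsionFree A]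

theorem nsmul_mem_divisibleElements_iff {a : A} {n : ℕ} (hn : n ≠ 0) :
    n • a ∈ divisibleElements A ↔ a ∈ divisibleElements A := by
  refine ⟨fun h => mem_divisibleElements.mpr fun m => ?_, (AddSubgroup.nsmul_mem _ · n)⟩
  obtain ⟨c, hc⟩ := mem_divisibleElements.mp h ⟨n * m, by positivity⟩
  refine ⟨c, nsmul_right_injective hn ?_⟩
  simpa [smul_smul, PNat.mul_coe] using hc

noncomputable instance : DivisibleBy (divisibleElements A) ℤ :=
  letI : DivisibleBy (divisibleElements A) ℕ :=
    divisibleByOfSMulRightSurj _ _ fun {n} hn ⟨a, ha⟩ => by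
      obtain ⟨b, rfl⟩ := mem_divisibleElements.mp ha ⟨n, Nat.pos_of_ne_zero hn⟩
      exact ⟨⟨b, (nsmul_mem_divisibleElements_iff hn).mp ha⟩, rfl⟩
  AddGroup.divisibleByIntOfDivisibleByNat _

theorem exists_ratHom_apply_one_eq {a : A} (ha : a ∈ divisibleElements A) :
    ∃ μ : ℚ →+ A, μ 1 = a := by
  obtain ⟨μ, hμ⟩ := AddMonoidHom.exists_apply_eq_of_divisibleBy (a := (1 : ℚ))
    (fun n hn => by simpa using hn) (⟨a, ha⟩ : divisibleElements A)
  exact ⟨(divisibleElements A).subtype.comp μ, by simp [hμ]⟩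

end DivisibleElements

section OrderedGroup

open ArchimedeanClass

variable {G : Type*} [AddCommGroup G] [LinearOrder G] [IsOrderedAddMonoid G]

theorem monotone_add_of_mk_lt_mk {φ : G →+ G} (hφ : ∀ x, φ x ≠ 0 → mk x < mk (φ x)) :
    Monotone fun x => x + φ x := by
  intro x y hxy
  have hz : 0 ≤ y - x := sub_nonneg.mpr hxy
  suffices 0 ≤ y - x + φ (y - x) by
    rw [map_sub, ← add_sub_add_comm] at this
    exact sub_nonneg.mp this
  by_cases h : φ (y - x) = 0
  · simpa [h] using hz
  · have hlt : mk (y - x) < mk (-φ (y - x)) := (mk_neg (φ (y - x))).symm ▸ hφ _ h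
    exact (neg_lt_iff_pos_add.mp (lt_of_mk_lt_mk_of_nonneg hlt hz)).le

theorem mk_map_one_le_mk_map (μ : ℚ →+ G) (q : ℚ) : mk (μ 1) ≤ mk (μ q) := by
  have h : (q.den : ℤ) • μ q = q.num • μ 1 := by
    rw [← map_zsmul, ← map_zsmul, zsmul_eq_mul, zsmul_eq_mul, mul_one, mul_comm]
    push_cast
    rw [Rat.mul_den_eq_num]
  calc mk (μ 1) ≤ mk (q.num • μ 1) := mk_le_mk_smul _ _
    _ = mk (μ q) := by rw [← h, mk_smul _ (by exact_mod_cast q.den_ne_zero)]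

theorem exists_monotone_addEquiv_of_mk_lt_mk (μ : ℚ →+ G) {b : G} (hb : mk b < mk (μ 1)) :
    ∃ f : G ≃+ G, Monotone f ∧ (∀ x, mk (μ 1) ≤ mk x → f x = x) ∧ f b = b + μ 1 := by
  set C := (mk (μ 1)).closedBallAddSubgroup
  have hb_free : ∀ n : ℤ, n • (b : G ⧸ C) = 0 → n = 0 := by
    intro n hn
    by_contra hn0
    rw [← QuotientAddGroup.mk_zsmul, QuotientAddGroup.eq_zero_iff, mem_closedBallAddSubgroup_iff,
      mk_smul _ hn0] at hn
    exact hb.not_ge hn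
  obtain ⟨ψ, hψ⟩ := AddMonoidHom.exists_apply_eq_of_divisibleBy hb_free (1 : ℚ)
  set φ : G →+ G := μ.comp (ψ.comp (QuotientAddGroup.mk' C))
  have hφC : ∀ x, mk (μ 1) ≤ mk x → φ x = 0 := fun x hx => by
    have hx0 : (x : G ⧸ C) = 0 :=
      (QuotientAddGroup.eq_zero_iff x).mpr (mem_closedBallAddSubgroup_iff.mpr hx)
    simp [φ, hx0]
  have hφφ : ∀ x, φ (φ x) = 0 := fun x => hφC _ (mk_map_one_le_mk_map μ _)
  refine ⟨φ.shearEquiv hφφ, monotone_add_of_mk_lt_mk fun x hx => ?_, fun x hx => ?_, ?_⟩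
  · exact (not_le.mp (mt (hφC x) hx)).trans_le (mk_map_one_le_mk_map μ _)
  · simp [hφC x hx]
  · simp [φ, hψ]

end OrderedGroup

section ZGroup

open ArchimedeanClass Cardinal

variable {G : Type*} [AddCommGroup G]

theorem countable_quotient_nsmul_range (one : G)
    (hdiv : ∀ g : G, ∀ n : ℤ, 0 < n → ∃ h : G, ∃ k : ℤ, g = n • h + k • one) (n : ℕ+) :
    Countable (G ⧸ (nsmulAddMonoidHom (n : ℕ) : G →+ G).range) := by
  refine Function.Surjective.countable (f := fun k : ℤ => ((k • one : G) : G ⧸ _)) fun x => ?_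
  induction x using QuotientAddGroup.induction_on with
  | H g =>
    obtain ⟨h, k, rfl⟩ := hdiv g n (by exact_mod_cast n.pos)
    refine ⟨k, (QuotientAddGroup.eq_iff_sub_mem).mpr ⟨-h, ?_⟩⟩
    simp

variable [LinearOrder G] [IsOrderedAddMonoid G] {one : G}

theorem mk_le_mk_of_mem_divisibleElements (hpos : 0 < one) (hleast : ∀ x : G, 0 < x → one ≤ x)
    (hrig : ∀ f : G ≃+ G, Monotone f → f one = one → ∀ x : G, f x = x)
    {a : G} (ha : a ∈ divisibleElements G) (ha0 : a ≠ 0) (g : G) : mk a ≤ mk g := by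
  by_contra! hg
  obtain ⟨μ, rfl⟩ := exists_ratHom_apply_one_eq ha
  obtain ⟨f, hmono, hfix, hfg⟩ := exists_monotone_addEquiv_of_mk_lt_mk μ hg
  have hone : mk (μ 1) ≤ mk one := mk_le_mk.mpr
    ⟨1, by simpa [abs_of_pos hpos] using hleast _ (abs_pos.mpr ha0)⟩
  have hfixg := hrig f hmono (hfix one hone) g
  exact ha0 (by simpa [hfg] using hfixg)

theorem archimedean_divisibleElements (hpos : 0 < one) (hleast : ∀ x : G, 0 < x → one ≤ x)
    (hrig : ∀ f : G ≃+ G, Monotone f → f one = one → ∀ x : G, f x = x) :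
    Archimedean (divisibleElements G) where
  arch x y hy := by
    obtain ⟨n, hn⟩ := mk_le_mk.mp
      (mk_le_mk_of_mem_divisibleElements hpos hleast hrig y.2 (by simpa using hy.ne') x)
    refine ⟨n, ?_⟩
    rw [← Subtype.coe_le_coe, AddSubgroup.coe_nsmul]
    simpa [abs_of_pos (show (0 : G) < y from hy)] using (le_abs_self (x : G)).trans hn

theorem mk_divisibleElements_le_continuum (hpos : 0 < one) (hleast : ∀ x : G, 0 < x → one ≤ x)
    (hrig : ∀ f : G ≃+ G, Monotone f → f one = one → ∀ x : G, f x = x) :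
    #(divisibleElements G) ≤ 𝔠 := by
  have := archimedean_divisibleElements hpos hleast hrig
  obtain ⟨e, he⟩ := Archimedean.exists_orderAddMonoidHom_real_injective (divisibleElements G)
  simpa [mk_real] using lift_mk_le_lift_mk_of_injective he

end ZGroup

/-- Every rigid Z-group has cardinality at most `2^ℵ₀`. -/
theorem rigid_zgroup_card_le_continuum (G : Type*) [AddCommGroup G] [LinearOrder G] [IsOrderedAddMonoid G] (one : G)
    (hpos : 0 < one) (hleast : ∀ x : G, 0 < x → one ≤ x)
    (hdiv : ∀ g : G, ∀ n : ℤ, 0 < n → ∃ h : G, ∃ k : ℤ, g = n • h + k • one)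
    (hrig : ∀ f : G ≃+ G, Monotone f → f one = one → ∀ x : G, f x = x) :
    Cardinal.mk G ≤ 2 ^ Cardinal.aleph0 := by
  rw [Cardinal.two_power_aleph0]
  calc Cardinal.mk G ≤ Cardinal.continuum * Cardinal.mk (divisibleElements G) :=
        mk_le_continuum_mul_mk_divisibleElements (countable_quotient_nsmul_range one hdiv)
    _ ≤ Cardinal.continuum * Cardinal.continuum :=
        mul_le_mul_right (mk_divisibleElements_le_continuum hpos hleast hrig) _
    _ = Cardinal.continuum := Cardinal.continuum_mul_self
end

section
/- Let G be a Z-group, D = ⋂_{n>0} nG, and L a pure subgroup of G with 1 ∈ L such that G is the internal direct sum of D and L. Assume D is archimedean and both D and L are cofinal in G. Let ν : G → ℝ be a monotone additive group homomorphism whose kernel is the largest convex subgroup of G intersecting D trivially; concretely, assume x ≤ y implies ν(x) ≤ ν(y), and ν(x) = 0 holds if and only if every d ∈ D satisfying |d| ≤ n·|x| for some natural number n is zero. Then the following are equivalent: (1) G is rigid; (2) the only real number γ > 0 such that {γ·ν(d) : d ∈ D} = {ν(d) : d ∈ D} and (γ − 1)·ν(l) ∈ {ν(d) : d ∈ D}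 for all l ∈ L is γ = 1. -/
/-!
A monotone automorphism `f` fixing `1` moves every element into `D`: from `g = n•h + k•1` we get
`f g - g = n•(f h - h)`. Since `ν ∘ f` and `ν` are monotone homomorphisms to `ℝ`, both positive at
some `d₀ ∈ D`, they are proportional, `ν ∘ f = γ ν` with `γ > 0`, and `γ` satisfies the criterion
(`f l - l` witnesses `(γ - 1) ν l ∈ ν[D]`). As `ν` is injective on `D`, `γ = 1` forces `f = id`.

Conversely, a multiplier `γ` sends `g = d + l` to `d' + e + l` with `ν d' = γ ν d` and
`ν e = (γ - 1) ν l`. Injectivity of `ν` on `D` makes this the unique `u ∈ g + D` with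
`ν u = γ ν g`, so the assignment is a monotone automorphism; it fixes `1` because `ν 1 = 0`, and it
fixes `d₀` only if `γ = 1`.
-/

namespace AddMonoidHom

variable {G : Type*} [AddCommGroup G] [LinearOrder G] {μ ν : G →+ ℝ} {d : G}

theorem div_le_div_of_monotone (hμ : Monotone μ) (hν : Monotone ν) (hμd : 0 < μ d)
    (hνd : 0 < ν d) (x : G) : ν x / ν d ≤ μ x / μ d := by
  by_contra! h
  obtain ⟨r, hμr, hrν⟩ := exists_rat_btwn h
  have hden : (0 : ℝ) < r.den := by positivity
  rw [Rat.cast_def, div_lt_div_iff₀ hμd hden] at hμr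
  rw [Rat.cast_def, div_lt_div_iff₀ hden hνd] at hrν
  have hlt : r.num • d < (r.den : ℤ) • x := hν.reflect_lt (by simpa [mul_comm] using hrν)
  have := hμ hlt.le
  simp only [map_zsmul, zsmul_eq_mul, Int.cast_natCast] at this
  linarith

theorem apply_eq_div_mul_of_monotone (hμ : Monotone μ) (hν : Monotone ν) (hμd : 0 < μ d)
    (hνd : 0 < ν d) (x : G) : μ x = μ d / ν d * ν x := by
  have h := le_antisymm (div_le_div_of_monotone hμ hν hμd hνd x)
    (div_le_div_of_monotone hν hμ hνd hμd x)
  field_simp at h ⊢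
  linarith

end AddMonoidHom

def AddSubgroup.infinitelyDivisible (G : Type*) [AddCommGroup G] : AddSubgroup G where
  carrier := {g | ∀ n : ℤ, 0 < n → ∃ h, g = n • h}
  zero_mem' n _ := ⟨0, (smul_zero n).symm⟩
  add_mem' ha hb n hn := by
    obtain ⟨a, rfl⟩ := ha n hn
    obtain ⟨b, rfl⟩ := hb n hn
    exact ⟨a + b, (smul_add n a b).symm⟩
  neg_mem' ha n hn := by
    obtain ⟨a, rfl⟩ := ha n hn
    exact ⟨-a, (smul_neg n a).symm⟩

section InfinitelyDivisible

open AddSubgroup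

variable {G : Type*} [AddCommGroup G]

theorem sub_mem_infinitelyDivisible {one : G}
    (hdiv : ∀ g : G, ∀ n : ℤ, 0 < n → ∃ h : G, ∃ k : ℤ, g = n • h + k • one)
    (f : G →+ G) (hf : f one = one) (g : G) : f g - g ∈ infinitelyDivisible G := by
  intro n hn
  obtain ⟨h, k, rfl⟩ := hdiv g n hn
  refine ⟨f h - h, ?_⟩
  rw [map_add, map_zsmul, map_zsmul, hf, smul_sub]
  abel

theorem eq_zero_of_mem_infinitelyDivisible_of_abs_le_nsmul [LinearOrder G] [IsOrderedAddMonoid G]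
    {one : G} (hpos : 0 < one) (hleast : ∀ x : G, 0 < x → one ≤ x) {d : G}
    (hd : d ∈ infinitelyDivisible G) {n : ℕ} (hdn : |d| ≤ n • one) : d = 0 := by
  by_contra hd0
  obtain ⟨h, hh⟩ := abs_mem_iff.2 hd ((n + 1 : ℕ) : ℤ) (by positivity)
  rw [natCast_zsmul] at hh
  have hh0 : 0 < h := (nsmul_pos_iff n.succ_ne_zero).1 (hh ▸ abs_pos.2 hd0)
  have hle : (n + 1) • one ≤ n • one := (nsmul_le_nsmul_right (hleast h hh0) _).trans (hh ▸ hdn)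
  rw [succ_nsmul, add_le_iff_nonpos_right] at hle
  exact hpos.not_ge hle

end InfinitelyDivisible

section Rescaling

variable {G : Type*} [AddCommGroup G] (D : AddSubgroup G) (ν : G →+ ℝ)

def IsRescaling (β : ℝ) (g u : G) : Prop :=
  u - g ∈ D ∧ ν u = β * ν g

def IsMultiplier (L : AddSubgroup G) (γ : ℝ) : Prop :=
  (fun x : ℝ => γ * x) '' (ν '' D) = ν '' D ∧ ∀ l ∈ L, (γ - 1) * ν l ∈ ν '' D

variable {D ν}

theorem isRescaling_one_self (g : G) : IsRescaling D ν 1 g g :=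
  ⟨by simp, (one_mul _).symm⟩

theorem isRescaling_self_of_map_eq_zero {β : ℝ} {g : G} (hg : ν g = 0) :
    IsRescaling D ν β g g :=
  ⟨by simp, by simp [hg]⟩

namespace IsRescaling

variable {β β' : ℝ} {g g' u u' v : G}

theorem add (h : IsRescaling D ν β g u) (h' : IsRescaling D ν β g' u') :
    IsRescaling D ν β (g + g') (u + u') := by
  refine ⟨?_, by rw [map_add, map_add, h.2, h'.2, mul_add]⟩
  convert D.add_mem h.1 h'.1 using 1
  abel

theorem trans (h : IsRescaling D ν β g u) (h' : IsRescaling D ν β' u v) :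
    IsRescaling D ν (β' * β) g v := by
  refine ⟨?_, by rw [h'.2, h.2, mul_assoc]⟩
  simpa using D.add_mem h'.1 h.1

theorem unique (hinj : ∀ d ∈ D, ν d = 0 → d = 0) (h : IsRescaling D ν β g u)
    (h' : IsRescaling D ν β g u') : u = u' := by
  have hD : u - u' ∈ D := by simpa using D.sub_mem h.1 h'.1
  exact sub_eq_zero.1 (hinj _ hD (by rw [map_sub, h.2, h'.2, sub_self]))

end IsRescaling

theorem exists_addEquiv_isRescaling (hinj : ∀ d ∈ D, ν d = 0 → d = 0) {β : ℝ} (hβ : β ≠ 0)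
    (hex : ∀ g, ∃ u, IsRescaling D ν β g u) (hex' : ∀ g, ∃ u, IsRescaling D ν β⁻¹ g u) :
    ∃ f : G ≃+ G, ∀ g, IsRescaling D ν β g (f g) := by
  choose F hF using hex
  choose F' hF' using hex'
  have hleft (g : G) : F' (F g) = g :=
    ((hF g).trans (hF' (F g))).unique hinj (inv_mul_cancel₀ hβ ▸ isRescaling_one_self g)
  have hright (g : G) : F (F' g) = g :=
    ((hF' g).trans (hF (F' g))).unique hinj (mul_inv_cancel₀ hβ ▸ isRescaling_one_self g)
  have hadd (g g' : G) : F (g + g') = F g + F g' :=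
    (hF (g + g')).unique hinj ((hF g).add (hF g'))
  exact ⟨⟨⟨F, F', hleft, hright⟩, hadd⟩, hF⟩

theorem monotone_of_isRescaling [LinearOrder G] [IsOrderedAddMonoid G] (hν : Monotone ν)
    (hinj : ∀ d ∈ D, ν d = 0 → d = 0) {β : ℝ} (hβ : 0 < β) (f : G ≃+ G)
    (hf : ∀ g, IsRescaling D ν β g (f g)) : Monotone f := by
  refine (monotone_iff_map_nonneg f).2 fun z hz => ?_
  rcases (show 0 ≤ ν z by simpa using hν hz).lt_or_eq with hνz | hνz
  · refine (hν.reflect_lt ?_).le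
    rw [map_zero, (hf z).2]
    exact mul_pos hβ hνz
  · rwa [(hf z).unique hinj (isRescaling_self_of_map_eq_zero hνz.symm)]

variable {L : AddSubgroup G} {γ : ℝ}

theorem IsMultiplier.inv (h : IsMultiplier D ν L γ) (hγ : γ ≠ 0) : IsMultiplier D ν L γ⁻¹ := by
  have himg : (fun x : ℝ => γ⁻¹ * x) '' (ν '' D) = ν '' D := by
    conv_lhs => rw [← h.1, Set.image_image]
    simp [inv_mul_cancel_left₀ hγ]
  refine ⟨himg, fun l hl => ?_⟩
  rw [← himg]
  refine ⟨(γ - 1) * ν (-l), h.2 _ (L.neg_mem hl), ?_⟩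
  simp only [map_neg]
  field_simp
  ring

theorem IsMultiplier.exists_isRescaling (h : IsMultiplier D ν L γ)
    (hsum : ∀ g : G, ∃ d ∈ D, ∃ l ∈ L, g = d + l) (g : G) : ∃ u, IsRescaling D ν γ g u := by
  obtain ⟨d, hd, l, hl, rfl⟩ := hsum g
  obtain ⟨d', hd', hνd'⟩ : γ * ν d ∈ ν '' D := h.1 ▸ ⟨ν d, ⟨d, hd, rfl⟩, rfl⟩
  obtain ⟨e, he, hνe⟩ := h.2 l hl
  refine ⟨d' + e + l, ?_, ?_⟩
  · convert D.sub_mem (D.add_mem hd' he) hd using 1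
    abel
  · rw [map_add, map_add, map_add, hνd', hνe]
    ring

theorem isMultiplier_of_isRescaling (f : G → G) (hsurj : Function.Surjective f)
    (hf : ∀ g, IsRescaling D ν γ g (f g)) : IsMultiplier D ν L γ := by
  refine ⟨Set.Subset.antisymm ?_ ?_, fun l _ => ⟨f l - l, (hf l).1, ?_⟩⟩
  · rintro _ ⟨_, ⟨d, hd, rfl⟩, rfl⟩
    exact ⟨f d, by simpa using D.add_mem (hf d).1 hd, (hf d).2⟩
  · rintro _ ⟨d, hd, rfl⟩
    obtain ⟨g, rfl⟩ := hsurj d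
    exact ⟨ν g, ⟨g, by simpa using D.sub_mem hd (hf g).1, rfl⟩, (hf g).2.symm⟩
  · rw [map_sub, (hf l).2]
    ring

end Rescaling

theorem rigid_iff_multiplier_criterion_general (G : Type*) [AddCommGroup G] [LinearOrder G] [IsOrderedAddMonoid G] (one : G)
    (hpos : 0 < one) (hleast : ∀ x : G, 0 < x → one ≤ x)
    (hdiv : ∀ g : G, ∀ n : ℤ, 0 < n → ∃ h : G, ∃ k : ℤ, g = n • h + k • one)
    (D : Set G) (hD : D = {g : G | ∀ n : ℤ, 0 < n → ∃ h : G, g = n • h})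
    (L : AddSubgroup G)
    (hsum : ∀ g : G, ∃ d ∈ D, ∃ l ∈ L, g = d + l)
    (hDcof : ∀ g : G, ∃ d ∈ D, g ≤ d)
    (ν : G →+ ℝ)
    (hmono : ∀ x y : G, x ≤ y → ν x ≤ ν y)
    (hker : ∀ x : G, ν x = 0 ↔ ∀ d ∈ D, (∃ n : ℕ, |d| ≤ n • |x|) → d = 0) :
    (∀ f : G ≃+ G, Monotone f → f one = one → ∀ x : G, f x = x) ↔
    (∀ γ : ℝ, 0 < γ →
      (fun x : ℝ => γ * x) '' (ν '' D) = ν '' D →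
      (∀ l ∈ L, (γ - 1) * ν l ∈ ν '' D) →
      γ = 1) := by
  obtain rfl : D = AddSubgroup.infinitelyDivisible G := hD
  set D := AddSubgroup.infinitelyDivisible G
  have hν : Monotone ν := hmono
  have hinj (d : G) (hd : d ∈ D) (hνd : ν d = 0) : d = 0 := (hker d).1 hνd d hd ⟨1, by simp⟩
  have hνpos (d : G) (hd : d ∈ D) (hd0 : 0 < d) : 0 < ν d :=
    (show 0 ≤ ν d by simpa using hν hd0.le).lt_of_ne' fun h => hd0.ne' (hinj d hd h)
  have hνone : ν one = 0 := (hker one).2 fun d hd ⟨n, hn⟩ =>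
    eq_zero_of_mem_infinitelyDivisible_of_abs_le_nsmul hpos hleast hd
      (by rwa [abs_of_pos hpos] at hn)
  obtain ⟨d₀, hd₀, hone_le⟩ := hDcof one
  have hνd₀ : 0 < ν d₀ := hνpos d₀ hd₀ (hpos.trans_le hone_le)
  constructor
  · intro hrigid γ hγ himg hL
    have hγ' : IsMultiplier D ν L γ := ⟨himg, hL⟩
    obtain ⟨f, hf⟩ := exists_addEquiv_isRescaling hinj hγ.ne' (hγ'.exists_isRescaling hsum)
      ((hγ'.inv hγ.ne').exists_isRescaling hsum)
    have hfone : f one = one := (hf one).unique hinj (isRescaling_self_of_map_eq_zero hνone)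
    have hfd₀ := (hf d₀).2
    rw [hrigid f (monotone_of_isRescaling hν hinj hγ f hf) hfone d₀] at hfd₀
    exact (mul_eq_right₀ hνd₀.ne').1 hfd₀.symm
  · intro hcrit f hf hfone
    have hmove := sub_mem_infinitelyDivisible hdiv f.toAddMonoidHom hfone
    have hνfd₀ : 0 < ν (f d₀) := hνpos _ (by simpa using D.add_mem (hmove d₀) hd₀)
      (by simpa using hf.strictMono_of_injective f.injective (hpos.trans_le hone_le))
    have hfγ (g : G) : IsRescaling D ν (ν (f d₀) / ν d₀) g (f g) :=
      ⟨hmove g, (ν.comp f.toAddMonoidHom).apply_eq_div_mul_of_monotone (hν.comp hf) hν hνfd₀ hνd₀ g⟩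
    have hγ : IsMultiplier D ν L (ν (f d₀) / ν d₀) := isMultiplier_of_isRescaling f f.surjective hfγ
    have hγ1 := hcrit _ (div_pos hνfd₀ hνd₀) hγ.1 hγ.2
    exact fun x => (hfγ x).unique hinj (hγ1 ▸ isRescaling_one_self x)

/-- The rigidity criterion for a Z-group `G = D ⊕ L` with `D = ⋂_{n>0} nG`
archimedean and `D`, `L` cofinal: given a monotone homomorphism `ν : G → ℝ` whose
kernel is the largest convex subgroup of `G` intersecting `D` trivially, `G` is
rigid if and only if the only `γ > 0` with `γ·ν[D] = ν[D]` and `(γ−1)·ν[L] ⊆ ν[D]`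
is `γ = 1`. -/
theorem rigid_iff_multiplier_criterion (G : Type*) [AddCommGroup G] [LinearOrder G] [IsOrderedAddMonoid G] (one : G)
    (hpos : 0 < one) (hleast : ∀ x : G, 0 < x → one ≤ x)
    (hdiv : ∀ g : G, ∀ n : ℤ, 0 < n → ∃ h : G, ∃ k : ℤ, g = n • h + k • one)
    (D : Set G) (hD : D = {g : G | ∀ n : ℤ, 0 < n → ∃ h : G, g = n • h})
    (L : AddSubgroup G) (honeL : one ∈ L)
    (hpure : ∀ (n : ℤ) (b : G), 0 < n → n • b ∈ L → b ∈ L)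
    (hDL : ∀ g : G, g ∈ D → g ∈ L → g = 0)
    (hsum : ∀ g : G, ∃ d ∈ D, ∃ l ∈ L, g = d + l)
    (harch : ∀ d ∈ D, ∀ d' ∈ D, 0 < d → ∃ n : ℕ, d' ≤ n • d)
    (hDcof : ∀ g : G, ∃ d ∈ D, g ≤ d)
    (hLcof : ∀ g : G, ∃ l ∈ L, g ≤ l)
    (ν : G →+ ℝ)
    (hmono : ∀ x y : G, x ≤ y → ν x ≤ ν y)
    (hker : ∀ x : G, ν x = 0 ↔ ∀ d ∈ D, (∃ n : ℕ, |d| ≤ n • |x|) → d = 0) :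
    (∀ f : G ≃+ G, Monotone f → f one = one → ∀ x : G, f x = x) ↔
    (∀ γ : ℝ, 0 < γ →
      (fun x : ℝ => γ * x) '' (ν '' D) = ν '' D →
      (∀ l ∈ L, (γ - 1) * ν l ∈ ν '' D) →
      γ = 1) :=
  rigid_iff_multiplier_criterion_general G one hpos hleast hdiv D hD L hsum hDcof ν hmono hker
end
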